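/- arXiv:1408.1732 — 2 statements merged into one kernel-verified Lean document; each statement's English description precedes it below -/
import Mathlib

section
/- For any 0 < ε < a < b and any cumulative distribution function F on ℝ, one has ∫_a^b (F(x+ε) - F(x-ε))/x dx ≤ 2ε(1/(a-ε) + 1/(b-ε)) ≤ 4ε/(a-ε). -/
/-- For any `0 < ε < a < b` and any cumulative distribution function `F`,
`∫_a^b (F(x+ε) - F(x-ε))/x dx ≤ 2ε(1/(a-ε) + 1/(b-ε)) ≤ 4ε/(a-ε)`. -/
theorem cdf_difference_integral_bound (F : ℝ → ℝ) (hF : Monotone F)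
    (hF0 : ∀ x, 0 ≤ F x) (hF1 : ∀ x, F x ≤ 1)
    (ε a b : ℝ) (hε : 0 < ε) (ha : ε < a) (hb : a < b) :
    (∫ x in a..b, (F (x + ε) - F (x - ε)) / x) ≤ 2 * ε * (1 / (a - ε) + 1 / (b - ε)) ∧
    2 * ε * (1 / (a - ε) + 1 / (b - ε)) ≤ 4 * ε / (a - ε) := by
  have ha0 : (0:ℝ) < a := lt_trans hε ha
  have haε : (0:ℝ) < a - ε := by linarith
  have hbε : (0:ℝ) < b - ε := by linarith
  -- integrability facts
  have hFint : ∀ c d : ℝ, IntervalIntegrable F MeasureTheory.volume c d := fun c d =>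
    hF.intervalIntegrable
  have hmono1 : Monotone (fun x => F (x + ε)) := fun x y h => hF (by linarith)
  have hmono2 : Monotone (fun x => F (x - ε)) := fun x y h => hF (by linarith)
  have hint1 : IntervalIntegrable (fun x => F (x + ε)) MeasureTheory.volume a b :=
    hmono1.intervalIntegrable
  have hint2 : IntervalIntegrable (fun x => F (x - ε)) MeasureTheory.volume a b :=
    hmono2.intervalIntegrable
  have hsub : IntervalIntegrable (fun x => F (x + ε) - F (x - ε)) MeasureTheory.volume a b :=
    hint1.sub hint2
  have hcont : ContinuousOn (fun x : ℝ => x⁻¹) (Set.uIcc a b) := by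
    apply ContinuousOn.inv₀ continuousOn_id
    intro x hx
    rw [Set.uIcc_of_le hb.le] at hx
    exact ne_of_gt (lt_of_lt_of_le ha0 hx.1)
  have hintq : IntervalIntegrable (fun x => (F (x + ε) - F (x - ε)) / x)
      MeasureTheory.volume a b := by
    simpa [div_eq_mul_inv] using hsub.mul_continuousOn hcont
  have hintq2 : IntervalIntegrable (fun x => (F (x + ε) - F (x - ε)) / a)
      MeasureTheory.volume a b := hsub.div_const a
  -- step 1 : pointwise bound by the constant weight 1/a
  have step1 : (∫ x in a..b, (F (x + ε) - F (x - ε)) / x) ≤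
      ∫ x in a..b, (F (x + ε) - F (x - ε)) / a := by
    apply intervalIntegral.integral_mono_on hb.le hintq hintq2
    intro x hx
    have hxa : a ≤ x := hx.1
    have hnum : 0 ≤ F (x + ε) - F (x - ε) := sub_nonneg.2 (hF (by linarith))
    exact div_le_div_of_nonneg_left hnum ha0 hxa |>.trans_eq rfl
  -- step 2 : evaluate the constant-weight integral
  have eval : (∫ x in a..b, (F (x + ε) - F (x - ε)) / a) =
      ((∫ x in b - ε..b + ε, F x) - ∫ x in a - ε..a + ε, F x) / a := by
    rw [intervalIntegral.integral_div, intervalIntegral.integral_sub hint1 hint2,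
      intervalIntegral.integral_comp_add_right, intervalIntegral.integral_comp_sub_right]
    congr 1
    have h1 : (∫ x in a + ε..b - ε, F x) + ∫ x in b - ε..b + ε, F x
        = ∫ x in a + ε..b + ε, F x :=
      intervalIntegral.integral_add_adjacent_intervals (hFint _ _) (hFint _ _)
    have h2 : (∫ x in a - ε..a + ε, F x) + ∫ x in a + ε..b - ε, F x
        = ∫ x in a - ε..b - ε, F x :=
      intervalIntegral.integral_add_adjacent_intervals (hFint _ _) (hFint _ _)
    linarith [h1, h2]
  -- step 3 : bound boundary integrals
  have hb1 : (∫ x in b - ε..b + ε, F x) ≤ 2 * ε := by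
    have : (∫ x in b - ε..b + ε, F x) ≤ ∫ _x in b - ε..b + ε, (1:ℝ) :=
      intervalIntegral.integral_mono_on (by linarith) (hFint _ _)
        intervalIntegrable_const (fun x _ => hF1 x)
    simpa using this.trans_eq (by simp [intervalIntegral.integral_const]; ring)
  have hb2 : (0:ℝ) ≤ ∫ x in a - ε..a + ε, F x :=
    intervalIntegral.integral_nonneg (by linarith) (fun x _ => hF0 x)
  have key : (∫ x in a..b, (F (x + ε) - F (x - ε)) / x) ≤ 2 * ε / a := by
    refine step1.trans ?_
    rw [eval]
    gcongr
    linarith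
  constructor
  · refine key.trans ?_
    have h1 : 2 * ε / a ≤ 2 * ε / (a - ε) := by
      apply div_le_div_of_nonneg_left (by linarith) haε (by linarith)
    have h2 : 0 ≤ 2 * ε / (b - ε) := by positivity
    calc 2 * ε / a ≤ 2 * ε / (a - ε) := h1
      _ ≤ 2 * ε * (1 / (a - ε) + 1 / (b - ε)) := by
          rw [mul_add, mul_one_div, mul_one_div]
          linarith
  · have h3 : 1 / (b - ε) ≤ 1 / (a - ε) :=
      one_div_le_one_div_of_le haε (by linarith)
    have h4 : 2 * ε * (1 / (a - ε) + 1 / (b - ε)) ≤ 2 * ε * (1 / (a - ε) + 1 / (a - ε)) := by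
      apply mul_le_mul_of_nonneg_left (by linarith) (by positivity)
    refine h4.trans (le_of_eq ?_)
    field_simp
    ring
end

section
/- For each integer m ≥ 1, the function p_m(x) = (1/π)·sin(πm/(m+1)) / (x^{m/(m+1)}·(x^{2/(m+1)} - 2x^{1/(m+1)} cos(πm/(m+1)) + 1)) for x > 0 is a probability density on (0,∞). -/
/-! With `q = 1/(m+1)` and `θ = πm/(m+1)`, the density is `1/π` times the derivative of
`arctan ((x^q - cos θ) / sin θ) / q`. The arctangent rises from `θ - π/2` at `0` to `π/2` at `∞`,
so the integral is `(π - θ) / (π q) = 1`. -/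

open Real Set Filter Topology MeasureTheory

namespace Real

lemma rpow_two_mul_eq_sq {x : ℝ} (hx : 0 ≤ x) (q : ℝ) : x ^ (2 * q) = (x ^ q) ^ 2 := by
  rw [mul_comm, rpow_mul hx, rpow_two]

lemma sq_sub_two_mul_mul_cos_add_one (w θ : ℝ) :
    w ^ 2 - 2 * w * cos θ + 1 = (w - cos θ) ^ 2 + sin θ ^ 2 := by
  linear_combination -sin_sq_add_cos_sq θ

lemma sq_sub_two_mul_mul_cos_add_one_pos {θ : ℝ} (hθ : sin θ ≠ 0) (w : ℝ) :
    0 < w ^ 2 - 2 * w * cos θ + 1 := by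
  rw [sq_sub_two_mul_mul_cos_add_one]
  positivity

lemma arctan_neg_cos_div_sin {θ : ℝ} (h0 : 0 < θ) (hπ : θ < π) :
    arctan (-cos θ / sin θ) = θ - π / 2 := by
  have htan : tan (θ - π / 2) = -cos θ / sin θ := by
    rw [tan_eq_sin_div_cos, sin_sub_pi_div_two, cos_sub_pi_div_two]
  rw [← htan, arctan_tan (by linarith) (by linarith)]

lemma sin_div_rpow_mul_quadratic_pos {θ x : ℝ} (hθ : 0 < sin θ) (hx : 0 < x) (q : ℝ) :
    0 < sin θ / (x ^ (1 - q) * (x ^ (2 * q) - 2 * x ^ q * cos θ + 1)) := by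
  rw [rpow_two_mul_eq_sq hx.le]
  have := sq_sub_two_mul_mul_cos_add_one_pos hθ.ne' (x ^ q)
  have := rpow_pos_of_pos hx (1 - q)
  positivity

lemma hasDerivAt_arctan_rpow_sub_cos_div_sin {θ q x : ℝ} (hθ : sin θ ≠ 0) (hq : q ≠ 0)
    (hx : 0 < x) :
    HasDerivAt (fun y => arctan ((y ^ q - cos θ) / sin θ) / q)
      (sin θ / (x ^ (1 - q) * (x ^ (2 * q) - 2 * x ^ q * cos θ + 1))) x := by
  have hinner : HasDerivAt (fun y => (y ^ q - cos θ) / sin θ) (q * x ^ (q - 1) / sin θ) x :=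
    ((hasDerivAt_rpow_const (Or.inl hx.ne')).sub_const _).div_const _
  refine ((hasDerivAt_arctan _).comp x hinner).div_const q |>.congr_deriv ?_
  have hw : 0 < x ^ q := rpow_pos_of_pos hx q
  rw [rpow_two_mul_eq_sq hx.le, rpow_sub hx, rpow_sub hx, rpow_one]
  have hQ := sq_sub_two_mul_mul_cos_add_one_pos hθ (x ^ q)
  rw [sq_sub_two_mul_mul_cos_add_one] at hQ ⊢
  field_simp
  ring

theorem integral_Ioi_sin_div_rpow_mul_quadratic {θ q : ℝ} (h0 : 0 < θ) (hπ : θ < π)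
    (hq : 0 < q) :
    ∫ x in Ioi (0 : ℝ), sin θ / (x ^ (1 - q) * (x ^ (2 * q) - 2 * x ^ q * cos θ + 1)) =
      (π - θ) / q := by
  have hs : 0 < sin θ := sin_pos_of_pos_of_lt_pi h0 hπ
  set G : ℝ → ℝ := fun y => arctan ((y ^ q - cos θ) / sin θ) / q
  have hcont : ContinuousWithinAt G (Ici 0) 0 :=
    ((continuous_arctan.continuousAt.comp
      (((continuousAt_rpow_const 0 q (Or.inr hq.le)).sub continuousAt_const).div_const _)).div_const
      _).continuousWithinAt
  have hlim : Tendsto G atTop (𝓝 (π / 2 / q)) :=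
    ((tendsto_nhds_of_tendsto_nhdsWithin tendsto_arctan_atTop).comp
      ((tendsto_atTop_add_const_right _ _ (tendsto_rpow_atTop hq)).atTop_div_const hs)).div_const q
  rw [integral_Ioi_of_hasDerivAt_of_nonneg hcont
    (fun x hx => hasDerivAt_arctan_rpow_sub_cos_div_sin hs.ne' hq.ne' hx)
    (fun x hx => (sin_div_rpow_mul_quadratic_pos hs hx q).le) hlim]
  simp only [G, zero_rpow hq.ne', zero_sub, arctan_neg_cos_div_sin h0 hπ]
  ring

end Real

/-- For each integer `m ≥ 1`, the function
`p_m(x) = (1/π)·sin(πm/(m+1)) / (x^{m/(m+1)}(x^{2/(m+1)} - 2x^{1/(m+1)}cos(πm/(m+1)) + 1))`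
is a probability density on `(0,∞)`: it is nonnegative there and integrates to `1`. -/
theorem productSpherical_density (m : ℕ) (hm : 1 ≤ m) :
    (∀ x : ℝ, 0 < x →
      0 ≤ (1 / Real.pi) * Real.sin (Real.pi * m / (m + 1)) /
        (x ^ ((m : ℝ) / (m + 1)) *
          (x ^ ((2 : ℝ) / (m + 1)) - 2 * x ^ ((1 : ℝ) / (m + 1)) *
            Real.cos (Real.pi * m / (m + 1)) + 1))) ∧
    (∫ x in Set.Ioi (0 : ℝ),
      (1 / Real.pi) * Real.sin (Real.pi * m / (m + 1)) /
        (x ^ ((m : ℝ) / (m + 1)) *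
          (x ^ ((2 : ℝ) / (m + 1)) - 2 * x ^ ((1 : ℝ) / (m + 1)) *
            Real.cos (Real.pi * m / (m + 1)) + 1)) = 1) := by
  have hM : (0 : ℝ) < m + 1 := by positivity
  set θ : ℝ := π * m / (m + 1) with hθ
  set q : ℝ := 1 / (m + 1) with hq
  have hθ0 : 0 < θ := by
    have : (1 : ℝ) ≤ m := by exact_mod_cast hm
    positivity
  have hθπ : θ < π := by
    rw [hθ, div_lt_iff₀ hM]
    nlinarith [pi_pos]
  have hsin : 0 < sin θ := sin_pos_of_pos_of_lt_pi hθ0 hθπ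
  have hexp₁ : (m : ℝ) / (m + 1) = 1 - q := by rw [hq]; field_simp; ring
  have hexp₂ : (2 : ℝ) / (m + 1) = 2 * q := by ring
  simp only [hexp₁, hexp₂, mul_div_assoc]
  refine ⟨fun x hx => mul_nonneg (by positivity) (sin_div_rpow_mul_quadratic_pos hsin hx q).le, ?_⟩
  rw [integral_const_mul, integral_Ioi_sin_div_rpow_mul_quadratic hθ0 hθπ (by positivity), hθ, hq]
  field_simp
  ring
end
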